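/- arXiv:1512.01449 — 2 statements merged into one kernel-verified Lean document; each statement's English description precedes it below -/
import Mathlib

section
/- For all even nonnegative integers p and q and all positive integers k₁, k₂, the following exact formula holds: f^{(p,q)}_{k₁,k₂} = Γ(k₁ + k₂ + (p+q)/2 − 3/2) + q · E(k₁ + p/2, k₂ + q/2 − 1). -/
open MeasureTheory

/-- The skew-orthogonal monic polynomials: `P_{2j}(x) = x^{2j}`,
`P_{2j+1}(x) = x^{2j+1} - 2j x^{2j-1}`, as functions on a field. -/
noncomputable def Pskew {K : Type*} [Field K] (k : ℕ) (x : K) : K :=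
  if Even k then x ^ k else x ^ k - ((k : K) - 1) * x ^ (k - 2)

/-- `f^{(p,q)}_{k₁,k₂} = (1/2) ∫∫ x^p y^q e^{-x²/2-y²/2} P_{2k₁-2}(x) P_{2k₂-1}(y) sign(y-x) dx dy`. -/
noncomputable def fpq (p q k₁ k₂ : ℕ) : ℝ :=
  (1 / 2) * ∫ x : ℝ, ∫ y : ℝ,
    x ^ p * y ^ q * Real.exp (-x ^ 2 / 2 - y ^ 2 / 2) *
      Pskew (2 * k₁ - 2) x * Pskew (2 * k₂ - 1) y * Real.sign (y - x)

/-- `E(j,k) = (k-1)! 2^{k-1} ∑_{i=0}^{k-1} Γ(i+j-1/2)/(2^i i!)`. -/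
noncomputable def Efun (j k : ℕ) : ℝ :=
  ((k - 1).factorial : ℝ) * 2 ^ (k - 1) *
    ∑ i ∈ Finset.range k, Real.Gamma ((i : ℝ) + (j : ℝ) - 1 / 2) / (2 ^ i * (i.factorial : ℝ))

/-!
With `Q = gaussTailPoly`, `-exp (-y²/2) * Q (k + 1) y` is an antiderivative of
`y^(2k+1) exp (-y²/2)` vanishing at `±∞`, so integrating an odd monomial against `sign (y - x)`
gives `2 exp (-x²/2) Q (k + 1) x`. The `y`-integral in `fpq` is therefore
`2 exp (-x²/2) (Q (N + 1) x - 2n Q N x)` with `N = k₂ - 1 + q/2`, and the `x`-integral reduces to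
the Gaussian moments `∫ x^(2s) exp (-x²) = Γ(s + 1/2)`. Since `Q (k + 1) = x^(2k) + 2k Q k` is the
same recursion as `Efun j (k + 1) = 2k Efun j k + Γ(k + j - 1/2)`, the `x`-moments of `Q k` are
`Efun`, and one more step of the recursion gives the formula.
-/

open Real Filter Set Topology

/-- `exp (-x²/2) * gaussTailPoly (k + 1) x = ∫_x^∞ y^(2k+1) exp (-y²/2) dy`. -/
noncomputable def gaussTailPoly : ℕ → ℝ → ℝ
  | 0, _ => 0
  | k + 1, x => x ^ (2 * k) + 2 * k * gaussTailPoly k x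

lemma hasDerivAt_exp_neg_sq_div_two (y : ℝ) :
    HasDerivAt (fun y => exp (-y ^ 2 / 2)) (-y * exp (-y ^ 2 / 2)) y := by
  have h : HasDerivAt (fun y : ℝ => -y ^ 2 / 2) (-y) y :=
    ((hasDerivAt_pow 2 y).neg.div_const 2).congr_deriv (by ring)
  simpa [mul_comm] using h.exp

lemma hasDerivAt_neg_exp_mul_gaussTailPoly (k : ℕ) (y : ℝ) :
    HasDerivAt (fun y => -exp (-y ^ 2 / 2) * gaussTailPoly (k + 1) y)
      (y ^ (2 * k + 1) * exp (-y ^ 2 / 2)) y := by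
  induction k with
  | zero =>
    simpa [gaussTailPoly] using (hasDerivAt_exp_neg_sq_div_two y).fun_neg
  | succ k ih =>
    have hsplit : (fun y => -exp (-y ^ 2 / 2) * gaussTailPoly (k + 1 + 1) y) = fun y =>
        -exp (-y ^ 2 / 2) * y ^ (2 * k + 2) +
          (2 * k + 2) * (-exp (-y ^ 2 / 2) * gaussTailPoly (k + 1) y) := by
      ext y; simp only [gaussTailPoly]; push_cast; ring
    rw [hsplit]
    refine (((hasDerivAt_exp_neg_sq_div_two y).fun_neg.fun_mul (hasDerivAt_pow _ y)).fun_add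
      (ih.const_mul (2 * k + 2 : ℝ))).congr_deriv ?_
    rw [show 2 * k + 2 - 1 = 2 * k + 1 by omega]
    push_cast
    ring

lemma tendsto_exp_mul_gaussTailPoly_cocompact (k : ℕ) :
    Tendsto (fun y => exp (-y ^ 2 / 2) * gaussTailPoly k y) (cocompact ℝ) (𝓝 0) := by
  induction k with
  | zero => simp [gaussTailPoly]
  | succ k ih =>
    have hmono := tendsto_rpow_abs_mul_exp_neg_mul_sq_cocompact one_half_pos (2 * k : ℕ)
    convert hmono.add (ih.const_mul (2 * k : ℝ)) using 1
    · ext y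
      rw [rpow_natCast, (even_two_mul k).pow_abs, gaussTailPoly]
      ring_nf
    · simp

lemma integrable_pow_mul_exp_neg_mul_sq (n : ℕ) {b : ℝ} (hb : 0 < b) :
    Integrable (fun x : ℝ => x ^ n * exp (-b * x ^ 2)) := by
  simpa [rpow_natCast] using
    integrable_rpow_mul_exp_neg_mul_sq hb (neg_one_lt_zero.trans_le (Nat.cast_nonneg n))

lemma integrable_pow_mul_exp_neg_sq_div_two (n : ℕ) :
    Integrable fun y : ℝ => y ^ n * exp (-y ^ 2 / 2) := by
  simpa [neg_div, div_eq_inv_mul] using integrable_pow_mul_exp_neg_mul_sq n one_half_pos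

lemma integrable_pow_mul_exp_neg_sq (n : ℕ) : Integrable fun x : ℝ => x ^ n * exp (-x ^ 2) := by
  simpa using integrable_pow_mul_exp_neg_mul_sq n one_pos

lemma Real.measurable_sign : Measurable Real.sign :=
  Measurable.ite (measurableSet_lt measurable_id measurable_const) measurable_const
    (Measurable.ite (measurableSet_lt measurable_const measurable_id) measurable_const
      measurable_const)

lemma MeasureTheory.Integrable.mul_sign_sub {g : ℝ → ℝ} (hg : Integrable g) (x : ℝ) :
    Integrable (fun y => g y * Real.sign (y - x)) := by
  refine hg.mul_bdd (c := 1) (measurable_sign.comp (measurable_sub_const x)).aestronglyMeasurable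
    (Eventually.of_forall fun y => ?_)
  rcases Real.sign_apply_eq (y - x) with h | h | h <;> simp [h]

theorem integral_mul_sign_sub_of_hasDerivAt {F g : ℝ → ℝ} (hF : ∀ y, HasDerivAt F (g y) y)
    (hg : Integrable g) (hbot : Tendsto F atBot (𝓝 0)) (htop : Tendsto F atTop (𝓝 0)) (x : ℝ) :
    ∫ y, g y * Real.sign (y - x) = -2 * F x := by
  have hgs := hg.mul_sign_sub x
  have hleft : ∫ y in Iic x, g y * Real.sign (y - x) = -(F x - 0) := by
    rw [← integral_Iic_of_hasDerivAt_of_tendsto' (fun y _ => hF y) hg.integrableOn hbot,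
      integral_Iic_eq_integral_Iio, integral_Iic_eq_integral_Iio, ← integral_neg]
    refine setIntegral_congr_fun measurableSet_Iio fun y hy => ?_
    simp [Real.sign_of_neg (sub_neg.mpr hy)]
  have hright : ∫ y in Ioi x, g y * Real.sign (y - x) = 0 - F x := by
    rw [← integral_Ioi_of_hasDerivAt_of_tendsto' (fun y _ => hF y) hg.integrableOn htop]
    refine setIntegral_congr_fun measurableSet_Ioi fun y hy => ?_
    simp [Real.sign_of_pos (sub_pos.mpr hy)]
  rw [← intervalIntegral.integral_Iic_add_Ioi hgs.integrableOn hgs.integrableOn, hleft, hright]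
  ring

lemma integral_odd_pow_mul_exp_mul_sign (k : ℕ) (x : ℝ) :
    ∫ y, y ^ (2 * k + 1) * exp (-y ^ 2 / 2) * Real.sign (y - x) =
      2 * exp (-x ^ 2 / 2) * gaussTailPoly (k + 1) x := by
  have hlim := (tendsto_exp_mul_gaussTailPoly_cocompact (k + 1)).neg
  rw [neg_zero] at hlim
  rw [integral_mul_sign_sub_of_hasDerivAt (hasDerivAt_neg_exp_mul_gaussTailPoly k)
    (integrable_pow_mul_exp_neg_sq_div_two _)
    (by simpa using hlim.mono_left atBot_le_cocompact)
    (by simpa using hlim.mono_left atTop_le_cocompact)]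
  ring

lemma integral_even_pow_mul_exp_neg_sq (s : ℕ) :
    ∫ x, x ^ (2 * s) * exp (-x ^ 2) = Gamma (s + 1 / 2) := by
  have hq : (-1 : ℝ) < (2 * s : ℕ) := neg_one_lt_zero.trans_le (Nat.cast_nonneg _)
  calc ∫ x, x ^ (2 * s) * exp (-x ^ 2)
      = 2 * ∫ x in Ioi 0, x ^ (2 * s) * exp (-x ^ 2) := by
        rw [← integral_comp_abs (f := fun x => x ^ (2 * s) * exp (-x ^ 2))]
        simp_rw [pow_mul, sq_abs]
    _ = 2 * ∫ x in Ioi 0, x ^ ((2 * s : ℕ) : ℝ) * exp (-x ^ (2 : ℝ)) := by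
        simp_rw [rpow_natCast, rpow_two]
    _ = Gamma (s + 1 / 2) := by
        rw [integral_rpow_mul_exp_neg_rpow two_pos hq]
        push_cast
        ring_nf

lemma Efun_succ (j k : ℕ) :
    Efun j (k + 1) = 2 * k * Efun j k + Gamma (k + j - 1 / 2) := by
  rcases k with _ | t
  · simp [Efun]
  unfold Efun
  rw [Finset.sum_range_succ, mul_add]
  simp only [Nat.add_sub_cancel]
  congr 1
  · rw [Nat.factorial_succ, pow_succ]
    push_cast
    ring
  · field_simp

lemma integrable_pow_mul_gaussTailPoly_mul_exp (n k : ℕ) :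
    Integrable fun x => x ^ n * gaussTailPoly k x * exp (-x ^ 2) := by
  induction k with
  | zero => simp [gaussTailPoly]
  | succ k ih =>
    refine ((integrable_pow_mul_exp_neg_sq (n + 2 * k)).add (ih.const_mul (2 * k))).congr
      (Eventually.of_forall fun x => ?_)
    simp only [Pi.add_apply, gaussTailPoly, pow_add]
    ring

lemma integral_even_pow_mul_gaussTailPoly_mul_exp (m k : ℕ) :
    ∫ x, x ^ (2 * m) * gaussTailPoly k x * exp (-x ^ 2) = Efun (m + 1) k := by
  induction k with
  | zero => simp [gaussTailPoly, Efun]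
  | succ k ih =>
    have hsplit : (fun x => x ^ (2 * m) * gaussTailPoly (k + 1) x * exp (-x ^ 2)) = fun x =>
        x ^ (2 * (m + k)) * exp (-x ^ 2) +
          2 * k * (x ^ (2 * m) * gaussTailPoly k x * exp (-x ^ 2)) := by
      ext x; simp only [gaussTailPoly, mul_add, pow_add]; ring
    rw [hsplit, integral_add (integrable_pow_mul_exp_neg_sq _)
      ((integrable_pow_mul_gaussTailPoly_mul_exp _ _).const_mul _), integral_const_mul,
      integral_even_pow_mul_exp_neg_sq, ih, Efun_succ]
    push_cast
    ring_nf

lemma Pskew_two_mul {K : Type*} [Field K] (n : ℕ) (x : K) : Pskew (2 * n) x = x ^ (2 * n) :=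
  if_pos (even_two_mul n)

lemma Pskew_two_mul_add_one {K : Type*} [Field K] (n : ℕ) (x : K) :
    Pskew (2 * n + 1) x = x ^ (2 * n + 1) - 2 * n * x ^ (2 * n - 1) := by
  rw [Pskew, if_neg (Nat.not_even_two_mul_add_one n), show 2 * n + 1 - 2 = 2 * n - 1 by omega]
  push_cast
  ring

lemma integral_even_pow_mul_Pskew_odd_mul_sign (b n : ℕ) (x : ℝ) :
    ∫ y, y ^ (2 * b) * Pskew (2 * n + 1) y * exp (-y ^ 2 / 2) * Real.sign (y - x) =
      2 * exp (-x ^ 2 / 2) * (gaussTailPoly (b + n + 1) x - 2 * n * gaussTailPoly (b + n) x) := by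
  rcases n with _ | d
  · have hmonomial (y : ℝ) : y ^ (2 * b) * Pskew (2 * 0 + 1) y = y ^ (2 * b + 1) := by
      rw [Pskew_two_mul_add_one]; ring
    simp_rw [hmonomial, integral_odd_pow_mul_exp_mul_sign]
    simp
  · have hsplit : (fun y => y ^ (2 * b) * Pskew (2 * (d + 1) + 1) y * exp (-y ^ 2 / 2) *
          Real.sign (y - x)) = fun y =>
        y ^ (2 * (b + d + 1) + 1) * exp (-y ^ 2 / 2) * Real.sign (y - x) -
          (2 * (d + 1)) * (y ^ (2 * (b + d) + 1) * exp (-y ^ 2 / 2) * Real.sign (y - x)) := by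
      ext y
      rw [Pskew_two_mul_add_one, show 2 * (d + 1) - 1 = 2 * d + 1 by omega]
      push_cast
      ring
    rw [hsplit, integral_sub ((integrable_pow_mul_exp_neg_sq_div_two _).mul_sign_sub x)
      (((integrable_pow_mul_exp_neg_sq_div_two _).mul_sign_sub x).const_mul _),
      integral_const_mul, integral_odd_pow_mul_exp_mul_sign, integral_odd_pow_mul_exp_mul_sign,
      show b + (d + 1) = b + d + 1 by omega]
    push_cast
    ring

lemma fpq_two_mul_two_mul_succ_succ (a b c n : ℕ) :
    fpq (2 * a) (2 * b) (c + 1) (n + 1) =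
      Efun (a + c + 1) (b + n + 1) - 2 * n * Efun (a + c + 1) (b + n) := by
  have hinner (x : ℝ) :
      ∫ y, x ^ (2 * a) * y ^ (2 * b) * exp (-x ^ 2 / 2 - y ^ 2 / 2) * Pskew (2 * (c + 1) - 2) x *
          Pskew (2 * (n + 1) - 1) y * Real.sign (y - x) =
        2 * (x ^ (2 * (a + c)) * gaussTailPoly (b + n + 1) x * exp (-x ^ 2)) -
          2 * n * (2 * (x ^ (2 * (a + c)) * gaussTailPoly (b + n) x * exp (-x ^ 2))) := by
    have hexp : exp (-x ^ 2) = exp (-x ^ 2 / 2) * exp (-x ^ 2 / 2) := by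
      rw [← exp_add]; ring_nf
    have hfactor : (fun y => x ^ (2 * a) * y ^ (2 * b) * exp (-x ^ 2 / 2 - y ^ 2 / 2) *
          Pskew (2 * (c + 1) - 2) x * Pskew (2 * (n + 1) - 1) y * Real.sign (y - x)) = fun y =>
        (x ^ (2 * (a + c)) * exp (-x ^ 2 / 2)) *
          (y ^ (2 * b) * Pskew (2 * n + 1) y * exp (-y ^ 2 / 2) * Real.sign (y - x)) := by
      ext y
      rw [show 2 * (c + 1) - 2 = 2 * c by omega, show 2 * (n + 1) - 1 = 2 * n + 1 by omega,
        Pskew_two_mul, sub_eq_add_neg, exp_add, neg_div, neg_div]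
      ring
    rw [hfactor, integral_const_mul, integral_even_pow_mul_Pskew_odd_mul_sign, hexp]
    ring
  rw [fpq, integral_congr_ae (Eventually.of_forall hinner),
    integral_sub ((integrable_pow_mul_gaussTailPoly_mul_exp _ _).const_mul _)
      (((integrable_pow_mul_gaussTailPoly_mul_exp _ _).const_mul _).const_mul _)]
  simp only [integral_const_mul, integral_even_pow_mul_gaussTailPoly_mul_exp]
  ring

/-- Exact evaluation of `f^{(p,q)}_{2k₁-2,2k₂-1}` for even `p`, `q`. -/
theorem fpq_exact (p q : ℕ) (hp : Even p) (hq : Even q)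
    (k₁ k₂ : ℕ) (hk₁ : 1 ≤ k₁) (hk₂ : 1 ≤ k₂) :
    fpq p q k₁ k₂ =
      Real.Gamma ((k₁ : ℝ) + (k₂ : ℝ) + ((p : ℝ) + (q : ℝ)) / 2 - 3 / 2) +
        (q : ℝ) * Efun (k₁ + p / 2) (k₂ + q / 2 - 1) := by
  obtain ⟨a, rfl⟩ := hp.two_dvd
  obtain ⟨b, rfl⟩ := hq.two_dvd
  obtain ⟨c, rfl⟩ : ∃ c, k₁ = c + 1 := ⟨k₁ - 1, by omega⟩
  obtain ⟨n, rfl⟩ : ∃ n, k₂ = n + 1 := ⟨k₂ - 1, by omega⟩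
  rw [fpq_two_mul_two_mul_succ_succ, Efun_succ, show c + 1 + 2 * a / 2 = a + c + 1 by omega,
    show n + 1 + 2 * b / 2 - 1 = b + n by omega]
  push_cast
  ring_nf
end

section
/- For all even nonnegative integers p and q and every integer n ≥ 1, the following integral representation holds: Σ_{k₁=1}^{n} Σ_{k₂=1}^{n} Γ(k₁ + k₂ + p/2 − 3/2) Γ(k₁ + k₂ + q/2 − 3/2) / (Γ(2k₁ − 1) Γ(2k₂ − 1)) = 4 ∫_0^∞ ∫_0^∞ x₁^p x₂^q (cosh_{n−1}(x₁ x₂))² e^{−x₁² − x₂²} dx₁ dx₂, where cosh_{n−1}(t) = Σ_{k=0}^{n−1} t^{2k}/(2k)! is the truncated hyperbolic cosine series. -/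
/-! The square of `coshTrunc n (x₁ * x₂)` is a finite sum of monomials
`(x₁ x₂)^(2(j₁ + j₂)) / ((2j₁)! (2j₂)!)`, so the integrand is a finite sum of products of a
function of `x₁` and a function of `x₂`, and the double integral is a finite sum of products of
half-line Gaussian moments `∫₀^∞ x^m e^{-x²} dx = Γ((m + 1)/2)/2`. Since `Γ(2k - 1) = (2k - 2)!`,
the substitution `k = j + 1` matches this sum with the double sum term by term. -/

open MeasureTheory

/-- The truncated hyperbolic cosine series `cosh_{n-1}(t) = ∑_{k=0}^{n-1} t^{2k}/(2k)!`. -/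
noncomputable def coshTrunc (n : ℕ) (t : ℝ) : ℝ :=
  ∑ k ∈ Finset.range n, t ^ (2 * k) / ((2 * k).factorial : ℝ)

open Set Finset Real
open scoped Nat

lemma integrableOn_pow_mul_exp_neg_sq (m : ℕ) :
    IntegrableOn (fun x : ℝ => x ^ m * exp (-x ^ 2)) (Ioi 0) := by
  refine (integrableOn_rpow_mul_exp_neg_rpow (s := m) (neg_one_lt_zero.trans_le m.cast_nonneg)
    two_pos).congr_fun (fun x _ => ?_) measurableSet_Ioi
  norm_cast

lemma integral_pow_mul_exp_neg_sq (m : ℕ) :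
    ∫ x in Ioi (0 : ℝ), x ^ m * exp (-x ^ 2) = Gamma ((m + 1) / 2) / 2 := by
  have h := integral_rpow_mul_exp_neg_rpow (q := m) two_pos (neg_one_lt_zero.trans_le m.cast_nonneg)
  norm_cast at h
  rw [h]
  push_cast
  ring

lemma Gamma_two_mul_natCast_succ_sub_one (j : ℕ) :
    Gamma (2 * ((j + 1 : ℕ) : ℝ) - 1) = (2 * j)! := by
  rw [← Gamma_nat_eq_factorial]
  congr 1
  push_cast
  ring

lemma integral_integral_sum_mul {α β : Type*} [MeasurableSpace α] [MeasurableSpace β]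
    {μ : Measure α} {ν : Measure β} {ι : Type*} {s : Finset ι} {f : ι → α → ℝ} {g : ι → β → ℝ}
    (hf : ∀ j ∈ s, Integrable (f j) μ) (hg : ∀ j ∈ s, Integrable (g j) ν) :
    ∫ x, ∫ y, ∑ j ∈ s, f j x * g j y ∂ν ∂μ = ∑ j ∈ s, (∫ x, f j x ∂μ) * ∫ y, g j y ∂ν := by
  have inner (x : α) : ∫ y, ∑ j ∈ s, f j x * g j y ∂ν = ∑ j ∈ s, (∫ y, g j y ∂ν) * f j x := by
    rw [integral_finsetSum s fun j hj => (hg j hj).const_mul (f j x)]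
    exact sum_congr rfl fun j _ => by rw [integral_const_mul, mul_comm]
  simp_rw [inner]
  rw [integral_finsetSum s fun j hj => (hf j hj).const_mul _]
  exact sum_congr rfl fun j _ => by rw [integral_const_mul, mul_comm]

lemma sum_Icc_one_eq_sum_range {M : Type*} [AddCommMonoid M] (f : ℕ → M) (n : ℕ) :
    ∑ k ∈ Icc 1 n, f k = ∑ j ∈ range n, f (j + 1) := by
  rw [range_eq_Ico, sum_Ico_add', zero_add, Finset.Ico_add_one_right_eq_Icc]

lemma coshTrunc_sq (n : ℕ) (t : ℝ) :
    coshTrunc n t ^ 2 = ∑ j ∈ range n ×ˢ range n,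
      t ^ (2 * (j.1 + j.2)) / ((2 * j.1)! * (2 * j.2)! : ℝ) := by
  rw [coshTrunc, sq, sum_mul_sum, ← sum_product']
  refine sum_congr rfl fun j _ => ?_
  rw [div_mul_div_comm, ← pow_add, mul_add]

lemma pow_mul_pow_mul_coshTrunc_sq_mul_exp (p q n : ℕ) (x₁ x₂ : ℝ) :
    x₁ ^ p * x₂ ^ q * coshTrunc n (x₁ * x₂) ^ 2 * exp (-x₁ ^ 2 - x₂ ^ 2) =
      ∑ j ∈ range n ×ˢ range n,
        x₁ ^ (p + 2 * (j.1 + j.2)) * exp (-x₁ ^ 2) / ((2 * j.1)! * (2 * j.2)! : ℝ) *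
          (x₂ ^ (q + 2 * (j.1 + j.2)) * exp (-x₂ ^ 2)) := by
  rw [coshTrunc_sq, mul_sum, sum_mul]
  refine sum_congr rfl fun j _ => ?_
  rw [sub_eq_add_neg, exp_add, mul_pow, pow_add, pow_add]
  ring

theorem double_sum_integral_rep_general (p q : ℕ) (n : ℕ) :
    ∑ k₁ ∈ Finset.Icc 1 n, ∑ k₂ ∈ Finset.Icc 1 n,
        Real.Gamma ((k₁ : ℝ) + (k₂ : ℝ) + (p : ℝ) / 2 - 3 / 2) *
          Real.Gamma ((k₁ : ℝ) + (k₂ : ℝ) + (q : ℝ) / 2 - 3 / 2) /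
          (Real.Gamma (2 * (k₁ : ℝ) - 1) * Real.Gamma (2 * (k₂ : ℝ) - 1)) =
      4 * ∫ x₁ in Set.Ioi (0 : ℝ), ∫ x₂ in Set.Ioi (0 : ℝ),
        x₁ ^ p * x₂ ^ q * (coshTrunc n (x₁ * x₂)) ^ 2 * Real.exp (-x₁ ^ 2 - x₂ ^ 2) := by
  simp_rw [pow_mul_pow_mul_coshTrunc_sq_mul_exp]
  rw [integral_integral_sum_mul (fun _ _ => (integrableOn_pow_mul_exp_neg_sq _).div_const _)
    (fun _ _ => integrableOn_pow_mul_exp_neg_sq _)]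
  simp_rw [integral_div, integral_pow_mul_exp_neg_sq]
  rw [sum_product, mul_sum, sum_Icc_one_eq_sum_range]
  refine sum_congr rfl fun j₁ _ => ?_
  rw [mul_sum, sum_Icc_one_eq_sum_range]
  refine sum_congr rfl fun j₂ _ => ?_
  have gamma_arg (r : ℕ) : ((j₁ + 1 : ℕ) : ℝ) + ((j₂ + 1 : ℕ) : ℝ) + (r : ℝ) / 2 - 3 / 2 =
      (((r + 2 * (j₁ + j₂) : ℕ) : ℝ) + 1) / 2 := by
    push_cast
    ring
  rw [gamma_arg, gamma_arg, Gamma_two_mul_natCast_succ_sub_one, Gamma_two_mul_natCast_succ_sub_one]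
  ring

/-- Gaussian integral representation of the double sum `S_{p,q}`. -/
theorem double_sum_integral_rep (p q : ℕ) (hp : Even p) (hq : Even q) (n : ℕ) (hn : 1 ≤ n) :
    ∑ k₁ ∈ Finset.Icc 1 n, ∑ k₂ ∈ Finset.Icc 1 n,
        Real.Gamma ((k₁ : ℝ) + (k₂ : ℝ) + (p : ℝ) / 2 - 3 / 2) *
          Real.Gamma ((k₁ : ℝ) + (k₂ : ℝ) + (q : ℝ) / 2 - 3 / 2) /
          (Real.Gamma (2 * (k₁ : ℝ) - 1) * Real.Gamma (2 * (k₂ : ℝ) - 1)) =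
      4 * ∫ x₁ in Set.Ioi (0 : ℝ), ∫ x₂ in Set.Ioi (0 : ℝ),
        x₁ ^ p * x₂ ^ q * (coshTrunc n (x₁ * x₂)) ^ 2 * Real.exp (-x₁ ^ 2 - x₂ ^ 2) :=
  double_sum_integral_rep_general p q n
end
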